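/- Assume Π_A satisfies cloned energy-band thermalization in the shell S (of cardinality d ≥ 1) with bandwidth ΔE > 0 and accuracy ε > 0, let ρ be a state supported on the shell, let w be a weight function with |w̃(δE)| ≤ w₀ for every |δE| ≥ ΔE (w₀ ≥ 0), and let κ ∈ (0,1). Then there exists a measurable set X ⊆ ℝ with ∫_X w(t) dt < κ such that for every t ∉ X, (Tr(ρ(t) Π_A) − ⟨Π_A⟩_S)² < (ε + w₀ · ⟨Π_A⟩_S) · d · Tr(ρ²) / κ. -/

import Mathlib

/-!
Write `Tr(ρ(t) Π_A) - ⟨Π_A⟩_S = Σ_{n,m ∈ S} ρ_{nm} δΠ_{mn} e^{-i(E_n - E_m)t}`. Averaging its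
squared modulus against `w` gives a sum over quadruples of amplitudes weighted by
`w̃(E_n - E_m - E_k + E_l)`. Quadruples inside the band (where `|w̃| ≤ 1`) contribute less than
`d ε Tr ρ²`, by Cauchy–Schwarz and cloned energy-band thermalization; the others (where
`|w̃| ≤ w₀`) contribute at most `w₀ Tr ρ² Σ |δΠ_{nm}|² ≤ w₀ d ⟨Π_A⟩_S Tr ρ²`, the last step because
`Π_A` is a projection. Markov's inequality for the weight `w` then yields the exceptional set.
-/

open MeasureTheory Filter
open scoped ComplexOrder

namespace QET

variable {D : ℕ}

/-- `exp(-itH)` for the Hamiltonian `H = Σ_n (E n) • P_n`, where `P_n` is the orthogonal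
projection onto the `n`-th vector of the fixed orthonormal eigenbasis `e`.  All operators are
written as matrices in this eigenbasis, so `H` is diagonal and
`exp(-itH) = diag (exp (-i t E n))`. -/
noncomputable def U (E : Fin D → ℝ) (t : ℝ) : Matrix (Fin D) (Fin D) ℂ :=
  Matrix.diagonal fun n => Complex.exp (-(Complex.I) * t * (E n))

/-- Time evolution `X(t) = exp(-itH) · X · exp(itH)`. -/
noncomputable def evolve (E : Fin D → ℝ) (t : ℝ) (X : Matrix (Fin D) (Fin D) ℂ) :
    Matrix (Fin D) (Fin D) ℂ :=
  U E t * X * U E (-t)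

/-- A state: a positive semidefinite operator with unit trace. -/
def IsState (ρ : Matrix (Fin D) (Fin D) ℂ) : Prop :=
  ρ.PosSemidef ∧ ρ.trace = 1

/-- An observable: an orthogonal projection (Hermitian idempotent). -/
def IsObservable (P : Matrix (Fin D) (Fin D) ℂ) : Prop :=
  P.IsHermitian ∧ P * P = P

/-- Orthogonal projection `Π_S` onto the energy shell spanned by `{e n : n ∈ S}`. -/
noncomputable def shellProj (S : Finset (Fin D)) : Matrix (Fin D) (Fin D) ℂ :=
  Matrix.diagonal fun n => if n ∈ S then 1 else 0

/-- A state is supported on the shell of `S`: `Π_S ρ Π_S = ρ`. -/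
def SupportedOn (S : Finset (Fin D)) (ρ : Matrix (Fin D) (Fin D) ℂ) : Prop :=
  shellProj S * ρ * shellProj S = ρ

/-- Thermal value `⟨P⟩_S = Tr(P Π_S)/d` (a real number: trace of Hermitian products below). -/
noncomputable def thermVal (S : Finset (Fin D)) (P : Matrix (Fin D) (Fin D) ℂ) : ℝ :=
  (P * shellProj S).trace.re / S.card

/-- Fourier transform `w̃(E) = ∫ w(t) exp(-iEt) dt` of a weight function. -/
noncomputable def fourier (w : ℝ → ℝ) (En : ℝ) : ℂ :=
  ∫ t : ℝ, (w t : ℂ) * Complex.exp (-(Complex.I) * En * t)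

/-- A weight function: integrable, nonnegative, normalized to `∫ w = 1`. -/
structure IsWeight (w : ℝ → ℝ) : Prop where
  integrable : Integrable w
  nonneg : ∀ t, 0 ≤ w t
  normalized : (∫ t : ℝ, w t) = 1

/-- A completely positive weight: a weight function whose Fourier transform is a
nonnegative real number everywhere. -/
structure IsCPWeight (w : ℝ → ℝ) extends IsWeight w : Prop where
  fourier_im : ∀ En : ℝ, (fourier w En).im = 0
  fourier_nonneg : ∀ En : ℝ, 0 ≤ (fourier w En).re

/-- The matrix element `⟨e n, (P - ⟨P⟩_S · 1) e m⟩ = ⟨e n, P e m⟩ - ⟨P⟩_S δ_{nm}`. -/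
noncomputable def devEl (S : Finset (Fin D)) (P : Matrix (Fin D) (Fin D) ℂ)
    (n m : Fin D) : ℂ :=
  P n m - if n = m then (thermVal S P : ℂ) else 0

/-- Band variance `Σ_{n,m ∈ S, |E n - E m| < ΔE} |⟨e n, P e m⟩ - ⟨P⟩_S δ_{nm}|²`. -/
noncomputable def bandVar (S : Finset (Fin D)) (E : Fin D → ℝ) (ΔE : ℝ)
    (P : Matrix (Fin D) (Fin D) ℂ) : ℝ :=
  ∑ n ∈ S, ∑ m ∈ S,
    if |E n - E m| < ΔE then ‖devEl S P n m‖ ^ 2 else 0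

/-- Energy-band thermalization in the shell `S` with bandwidth `ΔE` and accuracy `ε`. -/
def EnergyBandTherm (S : Finset (Fin D)) (E : Fin D → ℝ) (ΔE ε : ℝ)
    (P : Matrix (Fin D) (Fin D) ℂ) : Prop :=
  (1 / (S.card : ℝ)) * bandVar S E ΔE P < ε ^ 2

/-- Expectation value `⟨v, P v⟩` of an operator in a vector. -/
noncomputable def expVal (P : Matrix (Fin D) (Fin D) ℂ) (v : Fin D → ℂ) : ℂ :=
  dotProduct (star v) (P.mulVec v)

/-- Cloned energy-band thermalization in the shell `S` with bandwidth `ΔE` and accuracy `ε`: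
`(1/d²) Σ_{n,m,k,l ∈ S, |E n + E l - E m - E k| < ΔE} |δΠ_{nm}|² |δΠ_{lk}|² < ε²`,
where `δΠ_{nm} = ⟨e n, Π_A e m⟩ - ⟨Π_A⟩_S δ_{nm}`. -/
def ClonedEnergyBandTherm (S : Finset (Fin D)) (E : Fin D → ℝ) (ΔE ε : ℝ)
    (P : Matrix (Fin D) (Fin D) ℂ) : Prop :=
  (1 / (S.card : ℝ) ^ 2) *
    (∑ n ∈ S, ∑ m ∈ S, ∑ k ∈ S, ∑ l ∈ S,
      if |E n + E l - E m - E k| < ΔE then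
        ‖devEl S P n m‖ ^ 2 * ‖devEl S P l k‖ ^ 2
      else 0) < ε ^ 2

section ExpSum

variable {ι : Type*} (s : Finset ι) (a : ι → ℂ) (ω : ι → ℝ)

noncomputable def expSum (t : ℝ) : ℂ :=
  ∑ i ∈ s, a i * Complex.exp (-(Complex.I) * ω i * t)

lemma continuous_expSum : Continuous (expSum s a ω) := by
  unfold expSum
  fun_prop

lemma ofReal_norm_sq_expSum (t : ℝ) :
    ((‖expSum s a ω t‖ ^ 2 : ℝ) : ℂ) =
      ∑ i ∈ s, ∑ j ∈ s, a i * star (a j) * Complex.exp (-(Complex.I) * ↑(ω i - ω j) * t) := by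
  rw [Complex.ofReal_pow, ← Complex.mul_conj', expSum, map_sum, Finset.sum_mul_sum]
  refine Finset.sum_congr rfl fun i _ => Finset.sum_congr rfl fun j _ => ?_
  rw [map_mul, ← Complex.exp_conj, mul_mul_mul_comm, ← Complex.exp_add]
  simp only [map_mul, map_neg, Complex.conj_I, Complex.conj_ofReal, Complex.ofReal_sub,
    Complex.star_def]
  ring_nf

variable {w : ℝ → ℝ}

lemma integrable_mul_exp (hw : Integrable w) (En : ℝ) :
    Integrable fun t : ℝ => (w t : ℂ) * Complex.exp (-(Complex.I) * En * t) := by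
  refine hw.ofReal.mul_bdd (c := 1) (by fun_prop) (.of_forall fun t => ?_)
  rw [Complex.norm_exp]
  simp

lemma ofReal_mul_norm_sq_expSum (t : ℝ) :
    ((w t * ‖expSum s a ω t‖ ^ 2 : ℝ) : ℂ) =
      ∑ i ∈ s, ∑ j ∈ s, a i * star (a j) *
        ((w t : ℂ) * Complex.exp (-(Complex.I) * ↑(ω i - ω j) * t)) := by
  rw [Complex.ofReal_mul, ofReal_norm_sq_expSum, Finset.mul_sum]
  simp only [Finset.mul_sum]
  exact Finset.sum_congr rfl fun i _ => Finset.sum_congr rfl fun j _ => by ring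

lemma integrable_mul_norm_sq_expSum (hw : Integrable w) :
    Integrable fun t => w t * ‖expSum s a ω t‖ ^ 2 := by
  have h : Integrable fun t => ((w t * ‖expSum s a ω t‖ ^ 2 : ℝ) : ℂ) := by
    simp_rw [ofReal_mul_norm_sq_expSum]
    exact integrable_finsetSum _ fun i _ => integrable_finsetSum _ fun j _ =>
      (integrable_mul_exp hw _).const_mul _
  simpa only [RCLike.re_to_complex, Complex.ofReal_re] using h.re

lemma ofReal_integral_mul_norm_sq_expSum (hw : Integrable w) :
    ((∫ t, w t * ‖expSum s a ω t‖ ^ 2 : ℝ) : ℂ) =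
      ∑ i ∈ s, ∑ j ∈ s, a i * star (a j) * fourier w (ω i - ω j) := by
  rw [← integral_complex_ofReal]
  simp_rw [ofReal_mul_norm_sq_expSum]
  rw [integral_finsetSum _ fun i _ => integrable_finsetSum _ fun j _ =>
    (integrable_mul_exp hw _).const_mul _]
  refine Finset.sum_congr rfl fun i _ => ?_
  rw [integral_finsetSum _ fun j _ => (integrable_mul_exp hw _).const_mul _]
  exact Finset.sum_congr rfl fun j _ => integral_const_mul _ _

lemma integral_mul_norm_sq_expSum_le (hw : Integrable w) :
    ∫ t, w t * ‖expSum s a ω t‖ ^ 2 ≤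
      ∑ i ∈ s, ∑ j ∈ s, ‖a i‖ * ‖a j‖ * ‖fourier w (ω i - ω j)‖ := by
  calc ∫ t, w t * ‖expSum s a ω t‖ ^ 2
      ≤ ‖((∫ t, w t * ‖expSum s a ω t‖ ^ 2 : ℝ) : ℂ)‖ := by
        rw [Complex.norm_real]; exact Real.le_norm_self _
    _ ≤ ∑ i ∈ s, ∑ j ∈ s, ‖a i * star (a j) * fourier w (ω i - ω j)‖ := by
        rw [ofReal_integral_mul_norm_sq_expSum s a ω hw]
        exact (norm_sum_le _ _).trans (Finset.sum_le_sum fun i _ => norm_sum_le _ _)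
    _ = _ := by simp only [norm_mul, norm_star]

end ExpSum

lemma IsWeight.norm_fourier_le_one {w : ℝ → ℝ} (hw : IsWeight w) (En : ℝ) :
    ‖fourier w En‖ ≤ 1 := by
  refine (norm_integral_le_integral_norm _).trans_eq ?_
  simp_rw [norm_mul, Complex.norm_exp, Complex.norm_real, Real.norm_of_nonneg (hw.nonneg _)]
  simpa using hw.normalized

section BandSums

variable {ι : Type*} (s : Finset ι) (ω : ι → ℝ) (ΔE : ℝ)

lemma sum_mul_norm_fourier_le {w : ℝ → ℝ} (hw : IsWeight w) {w₀ : ℝ} (hw₀ : 0 ≤ w₀)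
    (hband : ∀ δE : ℝ, ΔE ≤ |δE| → ‖fourier w δE‖ ≤ w₀) {x : ι → ℝ} (hx : ∀ i, 0 ≤ x i) :
    ∑ i ∈ s, ∑ j ∈ s, x i * x j * ‖fourier w (ω i - ω j)‖ ≤
      ∑ i ∈ s, ∑ j ∈ s, (if |ω i - ω j| < ΔE then x i * x j else 0) +
        w₀ * (∑ i ∈ s, x i) ^ 2 := by
  rw [sq, Finset.sum_mul_sum, Finset.mul_sum, ← Finset.sum_add_distrib]
  refine Finset.sum_le_sum fun i _ => ?_
  rw [Finset.mul_sum, ← Finset.sum_add_distrib]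
  refine Finset.sum_le_sum fun j _ => ?_
  have hxx : 0 ≤ x i * x j := mul_nonneg (hx i) (hx j)
  split_ifs with h
  · nlinarith [hw.norm_fourier_le_one (ω i - ω j)]
  · nlinarith [hband _ (not_lt.1 h)]

lemma sum_band_mul_le (u v : ι → ℝ) :
    ∑ i ∈ s, ∑ j ∈ s, (if |ω i - ω j| < ΔE then u i * v i * (u j * v j) else 0) ≤
      (∑ i ∈ s, u i ^ 2) *
        √(∑ i ∈ s, ∑ j ∈ s, if |ω i - ω j| < ΔE then v i ^ 2 * v j ^ 2 else 0) := by
  have hsplit : ∀ i j, (if |ω i - ω j| < ΔE then u i * v i * (u j * v j) else 0) =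
      u i * u j * (if |ω i - ω j| < ΔE then v i * v j else 0) := by
    intro i j; split_ifs <;> ring
  have hsq : ∀ i j, (if |ω i - ω j| < ΔE then v i * v j else 0) ^ 2 =
      if |ω i - ω j| < ΔE then v i ^ 2 * v j ^ 2 else 0 := by
    intro i j; split_ifs <;> ring
  have hu : ∑ p ∈ s ×ˢ s, (u p.1 * u p.2) ^ 2 = (∑ i ∈ s, u i ^ 2) ^ 2 := by
    simp_rw [Finset.sum_product, mul_pow, ← Finset.mul_sum, ← Finset.sum_mul, sq]
  simp_rw [hsplit]
  simpa only [Finset.sum_product, hu, hsq,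
    Real.sqrt_sq (Finset.sum_nonneg fun i _ => sq_nonneg (u i))] using
    Real.sum_mul_le_sqrt_mul_sqrt (s ×ˢ s) (fun p => u p.1 * u p.2)
      (fun p => if |ω p.1 - ω p.2| < ΔE then v p.1 * v p.2 else 0)

end BandSums

theorem setIntegral_lt_of_integral_mul_lt {α : Type*} [MeasurableSpace α] {μ : Measure α}
    {w f : α → ℝ} {B κ : ℝ} (hw : Integrable w μ) (hw0 : ∀ t, 0 ≤ w t) (hf0 : ∀ t, 0 ≤ f t)
    (hf : Measurable f) (hwf : Integrable (fun t => w t * f t) μ)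
    (hB : ∫ t, w t * f t ∂μ < B) (hκ : 0 < κ) :
    ∫ t in {t | B / κ ≤ f t}, w t ∂μ < κ := by
  have hwf0 : 0 ≤ᵐ[μ] fun t => w t * f t := .of_forall fun t => mul_nonneg (hw0 t) (hf0 t)
  have hB0 : 0 < B := (integral_nonneg_of_ae hwf0).trans_lt hB
  have hpt : ∀ t ∈ {t | B / κ ≤ f t}, w t ≤ κ / B * (w t * f t) := fun t ht => by
    have : 1 ≤ κ / B * f t := by
      replace ht : B ≤ f t * κ := (div_le_iff₀ hκ).1 ht
      rw [div_mul_eq_mul_div, le_div_iff₀ hB0]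
      linarith
    nlinarith [hw0 t]
  calc ∫ t in {t | B / κ ≤ f t}, w t ∂μ
      ≤ ∫ t in {t | B / κ ≤ f t}, κ / B * (w t * f t) ∂μ :=
        setIntegral_mono_on hw.integrableOn (hwf.const_mul _).integrableOn
          (measurableSet_le measurable_const hf) hpt
    _ = κ / B * ∫ t in {t | B / κ ≤ f t}, w t * f t ∂μ := integral_const_mul _ _
    _ ≤ κ / B * ∫ t, w t * f t ∂μ :=
        mul_le_mul_of_nonneg_left (setIntegral_le_integral hwf hwf0) (div_pos hκ hB0).le
    _ < κ / B * B := by gcongr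
    _ = κ := div_mul_cancel₀ κ hB0.ne'

lemma evolve_apply (E : Fin D → ℝ) (t : ℝ) (X : Matrix (Fin D) (Fin D) ℂ) (n m : Fin D) :
    evolve E t X n m = Complex.exp (-(Complex.I) * ↑(E n - E m) * t) * X n m := by
  rw [evolve, U, U, Matrix.mul_diagonal, Matrix.diagonal_mul, mul_right_comm,
    ← Complex.exp_add]
  push_cast
  ring_nf

lemma trace_evolve (E : Fin D → ℝ) (t : ℝ) (X : Matrix (Fin D) (Fin D) ℂ) :
    (evolve E t X).trace = X.trace := by
  have hU : U E (-t) * U E t = 1 := by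
    rw [U, U, Matrix.diagonal_mul_diagonal, ← Matrix.diagonal_one]
    congr 1
    funext n
    rw [← Complex.exp_add]
    push_cast
    ring_nf
    exact Complex.exp_zero
  rw [evolve, Matrix.trace_mul_comm, ← Matrix.mul_assoc, hU, Matrix.one_mul]

lemma SupportedOn.apply_eq_zero {S : Finset (Fin D)} {ρ : Matrix (Fin D) (Fin D) ℂ}
    (h : SupportedOn S ρ) {n m : Fin D} (hnm : n ∉ S ∨ m ∉ S) : ρ n m = 0 := by
  rw [← h, shellProj, Matrix.mul_diagonal, Matrix.diagonal_mul]
  rcases hnm with hn | hm <;> simp [*]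

lemma devEl_eq_sub_smul_one (S : Finset (Fin D)) (P : Matrix (Fin D) (Fin D) ℂ) (n m : Fin D) :
    devEl S P n m = (P - (thermVal S P : ℂ) • 1) n m := by
  rw [devEl, Matrix.sub_apply, Matrix.smul_apply, Matrix.one_apply, smul_ite, smul_eq_mul,
    mul_one, smul_zero]

noncomputable def devAmp (S : Finset (Fin D)) (ρ P : Matrix (Fin D) (Fin D) ℂ)
    (p : Fin D × Fin D) : ℂ :=
  ρ p.1 p.2 * devEl S P p.2 p.1

lemma trace_evolve_mul_sub_thermVal (E : Fin D → ℝ) {S : Finset (Fin D)}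
    {ρ : Matrix (Fin D) (Fin D) ℂ} (hsupp : SupportedOn S ρ) (htr : ρ.trace = 1)
    (P : Matrix (Fin D) (Fin D) ℂ) (t : ℝ) :
    (evolve E t ρ * P).trace - thermVal S P =
      expSum (S ×ˢ S) (devAmp S ρ P) (fun p => E p.1 - E p.2) t := by
  have hvanish : ∀ n m, n ∉ S ∨ m ∉ S →
      evolve E t ρ n m * (P - (thermVal S P : ℂ) • 1) m n = 0 := fun n m hnm => by
    rw [evolve_apply, hsupp.apply_eq_zero hnm, mul_zero, zero_mul]
  calc (evolve E t ρ * P).trace - thermVal S P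
      = (evolve E t ρ * (P - (thermVal S P : ℂ) • 1)).trace := by
        rw [Matrix.mul_sub, Matrix.trace_sub, Matrix.mul_smul, Matrix.trace_smul, Matrix.mul_one,
          trace_evolve, htr, smul_eq_mul, mul_one]
    _ = ∑ n, ∑ m, evolve E t ρ n m * (P - (thermVal S P : ℂ) • 1) m n := by
        simp only [Matrix.trace, Matrix.diag, Matrix.mul_apply]
    _ = ∑ n ∈ S, ∑ m ∈ S, evolve E t ρ n m * (P - (thermVal S P : ℂ) • 1) m n := by
        rw [← Finset.sum_subset (Finset.subset_univ S) fun n _ hn =>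
          Finset.sum_eq_zero fun m _ => hvanish n m (.inl hn)]
        exact Finset.sum_congr rfl fun n _ => (Finset.sum_subset (Finset.subset_univ S)
          fun m _ hm => hvanish n m (.inr hm)).symm
    _ = _ := by
        rw [expSum, Finset.sum_product]
        simp only [evolve_apply, devAmp, devEl_eq_sub_smul_one]
        exact Finset.sum_congr rfl fun n _ => Finset.sum_congr rfl fun m _ => by ring

lemma _root_.Matrix.IsHermitian.mul_self_apply_self {ι : Type*} [Fintype ι] {A : Matrix ι ι ℂ}
    (hA : A.IsHermitian) (n : ι) : (A * A) n n = ((∑ m, ‖A n m‖ ^ 2 : ℝ) : ℂ) := by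
  rw [Matrix.mul_apply, Complex.ofReal_sum]
  refine Finset.sum_congr rfl fun m _ => ?_
  rw [← hA.apply m n, Complex.star_def, Complex.mul_conj', Complex.ofReal_pow]

lemma _root_.Matrix.IsHermitian.re_trace_mul_self {ι : Type*} [Fintype ι] {A : Matrix ι ι ℂ}
    (hA : A.IsHermitian) :
    (A * A).trace.re = ∑ n, ∑ m, ‖A n m‖ ^ 2 := by
  simp only [Matrix.trace, Matrix.diag, hA.mul_self_apply_self, Complex.re_sum,
    Complex.ofReal_re]

lemma IsState.re_trace_mul_self_pos {ρ : Matrix (Fin D) (Fin D) ℂ} (hρ : IsState ρ) :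
    0 < (ρ * ρ).trace.re := by
  rw [hρ.1.1.re_trace_mul_self]
  obtain ⟨n, -, hn⟩ := Finset.exists_ne_zero_of_sum_ne_zero (hρ.2 ▸ one_ne_zero : ρ.trace ≠ 0)
  exact Finset.sum_pos' (fun _ _ => by positivity) ⟨n, Finset.mem_univ n,
    Finset.sum_pos' (fun _ _ => by positivity)
      ⟨n, Finset.mem_univ n, pow_pos (norm_pos_iff.2 hn) 2⟩⟩

lemma IsObservable.re_apply_self {P : Matrix (Fin D) (Fin D) ℂ} (hP : IsObservable P) (n : Fin D) :
    (P n n).re = ∑ m, ‖P n m‖ ^ 2 := by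
  have h := hP.1.mul_self_apply_self n
  rw [hP.2] at h
  rw [h, Complex.ofReal_re]

lemma card_mul_thermVal (S : Finset (Fin D)) (P : Matrix (Fin D) (Fin D) ℂ) :
    (S.card : ℝ) * thermVal S P = ∑ n ∈ S, (P n n).re := by
  have htrace : (P * shellProj S).trace = ∑ n ∈ S, P n n := by
    simp only [Matrix.trace, Matrix.diag, shellProj, Matrix.mul_diagonal, mul_ite, mul_one,
      mul_zero, Finset.sum_ite_mem, Finset.univ_inter]
  rcases S.eq_empty_or_nonempty with rfl | hS
  · simp
  · rw [thermVal, htrace, Complex.re_sum, mul_div_cancel₀ _ (by positivity)]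

lemma norm_sq_devEl (S : Finset (Fin D)) (P : Matrix (Fin D) (Fin D) ℂ) (n m : Fin D) :
    ‖devEl S P n m‖ ^ 2 = ‖P n m‖ ^ 2 +
      if n = m then thermVal S P ^ 2 - 2 * thermVal S P * (P n n).re else 0 := by
  rw [devEl]
  split_ifs with h
  · subst h
    simp only [Complex.sq_norm, Complex.normSq_apply, Complex.sub_re, Complex.sub_im,
      Complex.ofReal_re, Complex.ofReal_im]
    ring
  · simp

lemma IsObservable.sum_norm_sq_devEl_le {P : Matrix (Fin D) (Fin D) ℂ} (hP : IsObservable P)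
    (S : Finset (Fin D)) :
    ∑ n ∈ S, ∑ m ∈ S, ‖devEl S P n m‖ ^ 2 ≤ S.card * thermVal S P := by
  set c := thermVal S P
  have hrow : ∀ n ∈ S, ∑ m ∈ S, ‖devEl S P n m‖ ^ 2 ≤ (P n n).re + (c ^ 2 - 2 * c * (P n n).re) :=
    fun n hn => by
      rw [Finset.sum_congr rfl fun m _ => norm_sq_devEl S P n m, Finset.sum_add_distrib,
        Finset.sum_ite_eq S n, if_pos hn, hP.re_apply_self]
      gcongr
      exact Finset.subset_univ S
  calc ∑ n ∈ S, ∑ m ∈ S, ‖devEl S P n m‖ ^ 2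
      ≤ ∑ n ∈ S, ((P n n).re + (c ^ 2 - 2 * c * (P n n).re)) := Finset.sum_le_sum hrow
    _ = S.card * c - S.card * c ^ 2 := by
        rw [Finset.sum_add_distrib, Finset.sum_sub_distrib, ← Finset.mul_sum, ← card_mul_thermVal,
          Finset.sum_const, nsmul_eq_mul]
        ring
    _ ≤ S.card * c := by
        have : 0 ≤ (S.card : ℝ) * c ^ 2 := by positivity
        linarith

lemma _root_.Matrix.IsHermitian.norm_devEl_comm {P : Matrix (Fin D) (Fin D) ℂ} (hP : P.IsHermitian)
    (S : Finset (Fin D)) (n m : Fin D) : ‖devEl S P m n‖ = ‖devEl S P n m‖ := by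
  rcases eq_or_ne n m with rfl | h
  · rfl
  · rw [devEl, devEl, if_neg h.symm, if_neg h, sub_zero, sub_zero, ← hP.apply n m, norm_star]

lemma ClonedEnergyBandTherm.sqrt_sum_lt {S : Finset (Fin D)} {E : Fin D → ℝ} {ΔE ε : ℝ}
    {P : Matrix (Fin D) (Fin D) ℂ} (h : ClonedEnergyBandTherm S E ΔE ε P) (hP : P.IsHermitian)
    (hd : 0 < S.card) (hε : 0 < ε) :
    √(∑ p ∈ S ×ˢ S, ∑ q ∈ S ×ˢ S, if |(E p.1 - E p.2) - (E q.1 - E q.2)| < ΔE then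
        ‖devEl S P p.1 p.2‖ ^ 2 * ‖devEl S P q.1 q.2‖ ^ 2 else 0) < S.card * ε := by
  rw [Real.sqrt_lt' (by positivity), mul_pow]
  rw [ClonedEnergyBandTherm, one_div, inv_mul_lt_iff₀ (by positivity)] at h
  refine Eq.trans_lt ?_ h
  simp only [Finset.sum_product]
  refine Finset.sum_congr rfl fun n _ => Finset.sum_congr rfl fun m _ =>
    Finset.sum_congr rfl fun k _ => Finset.sum_congr rfl fun l _ => ?_
  rw [hP.norm_devEl_comm S l k, show E n - E m - (E k - E l) = E n + E l - E m - E k by ring]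

theorem integral_mul_norm_sq_deviation_lt (E : Fin D → ℝ) {S : Finset (Fin D)}
    (hd : 0 < S.card) {P : Matrix (Fin D) (Fin D) ℂ} (hP : IsObservable P) {ΔE ε : ℝ}
    (hε : 0 < ε) (hCEBT : ClonedEnergyBandTherm S E ΔE ε P) {ρ : Matrix (Fin D) (Fin D) ℂ}
    (hρ : IsState ρ) {w : ℝ → ℝ} (hw : IsWeight w) {w₀ : ℝ} (hw₀ : 0 ≤ w₀)
    (hband : ∀ δE : ℝ, ΔE ≤ |δE| → ‖fourier w δE‖ ≤ w₀) :
    ∫ t, w t * ‖expSum (S ×ˢ S) (devAmp S ρ P) (fun p => E p.1 - E p.2) t‖ ^ 2 <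
      (ε + w₀ * thermVal S P) * (S.card * (ρ * ρ).trace.re) := by
  set u : Fin D × Fin D → ℝ := fun p => ‖ρ p.1 p.2‖
  set v : Fin D × Fin D → ℝ := fun p => ‖devEl S P p.1 p.2‖
  have hR0 : 0 < (ρ * ρ).trace.re := hρ.re_trace_mul_self_pos
  have hu : ∑ p ∈ S ×ˢ S, u p ^ 2 ≤ (ρ * ρ).trace.re := by
    rw [hρ.1.1.re_trace_mul_self, ← Finset.sum_product']
    exact Finset.sum_le_sum_of_subset_of_nonneg (Finset.subset_univ _) fun p _ _ => by positivity
  have hv : ∑ p ∈ S ×ˢ S, v p ^ 2 ≤ S.card * thermVal S P := by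
    rw [Finset.sum_product]
    exact hP.sum_norm_sq_devEl_le S
  have hnorm : ∀ p, ‖devAmp S ρ P p‖ = u p * v p := fun p => by
    rw [devAmp, norm_mul, hP.1.norm_devEl_comm]
  have hinband := (sum_band_mul_le (S ×ˢ S) (fun p => E p.1 - E p.2) ΔE u v).trans_lt
    ((mul_le_mul_of_nonneg_right hu (Real.sqrt_nonneg _)).trans_lt
      (mul_lt_mul_of_pos_left (hCEBT.sqrt_sum_lt hP.1 hd hε) hR0))
  have hall : (∑ p ∈ S ×ˢ S, u p * v p) ^ 2 ≤ (ρ * ρ).trace.re * (S.card * thermVal S P) :=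
    (Finset.sum_mul_sq_le_sq_mul_sq _ u v).trans (mul_le_mul hu hv (by positivity) hR0.le)
  calc _ ≤ ∑ p ∈ S ×ˢ S, ∑ q ∈ S ×ˢ S, u p * v p * (u q * v q) *
          ‖fourier w ((E p.1 - E p.2) - (E q.1 - E q.2))‖ := by
        simpa only [hnorm] using integral_mul_norm_sq_expSum_le (S ×ˢ S) (devAmp S ρ P)
          (fun p => E p.1 - E p.2) hw.integrable
    _ ≤ _ := sum_mul_norm_fourier_le _ _ ΔE hw hw₀ hband fun p => by positivity
    _ < (ρ * ρ).trace.re * (S.card * ε) + w₀ * ((ρ * ρ).trace.re * (S.card * thermVal S P)) :=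
        add_lt_add_of_lt_of_le hinband (mul_le_mul_of_nonneg_left hall hw₀)
    _ = _ := by ring

theorem cloned_energy_band_implies_equilibrium_at_almost_all_times_general
    {D : ℕ} (E : Fin D → ℝ)
    (S : Finset (Fin D)) (hd : 1 ≤ S.card)
    (PiA : Matrix (Fin D) (Fin D) ℂ) (hPiA : IsObservable PiA)
    (ΔE ε : ℝ) (hε : 0 < ε)
    (hCEBT : ClonedEnergyBandTherm S E ΔE ε PiA)
    (ρ : Matrix (Fin D) (Fin D) ℂ) (hρ : IsState ρ) (hsupp : SupportedOn S ρ)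
    (w : ℝ → ℝ) (hw : IsWeight w) (w₀ : ℝ) (hw₀ : 0 ≤ w₀)
    (hband : ∀ δE : ℝ, ΔE ≤ |δE| → ‖fourier w δE‖ ≤ w₀)
    (κ : ℝ) (hκ0 : 0 < κ) :
    ∃ X : Set ℝ, MeasurableSet X ∧ (∫ t in X, w t) < κ ∧
      ∀ t ∉ X,
        ((evolve E t ρ * PiA).trace.re - thermVal S PiA) ^ 2
          < (ε + w₀ * thermVal S PiA) * (S.card * (ρ * ρ).trace.re) / κ := by
  set g := expSum (S ×ˢ S) (devAmp S ρ PiA) (fun p => E p.1 - E p.2)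
  have hdev : ∀ t, ((evolve E t ρ * PiA).trace.re - thermVal S PiA) ^ 2 ≤ ‖g t‖ ^ 2 := fun t => by
    rw [show g t = _ from (trace_evolve_mul_sub_thermVal E hsupp hρ.2 PiA t).symm,
      ← Complex.ofReal_re (thermVal S PiA), ← Complex.sub_re]
    exact sq_le_sq.2 ((Complex.abs_re_le_norm _).trans (le_abs_self _))
  have hmeas : Measurable fun t => ‖g t‖ ^ 2 := ((continuous_expSum _ _ _).norm.pow 2).measurable
  exact ⟨_, measurableSet_le measurable_const hmeas,
    setIntegral_lt_of_integral_mul_lt hw.integrable hw.nonneg (fun t => sq_nonneg _) hmeas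
      (integrable_mul_norm_sq_expSum _ _ _ hw.integrable)
      (integral_mul_norm_sq_deviation_lt E hd hPiA hε hCEBT hρ hw hw₀ hband) hκ0,
    fun t ht => (hdev t).trans_lt (not_le.1 ht)⟩

/-- **Cloned energy-band thermalization implies thermal equilibrium at almost all times.**
If `Π_A` satisfies cloned energy-band thermalization in the shell `S` (of cardinality
`d ≥ 1`) with bandwidth `ΔE > 0` and accuracy `ε > 0`, `ρ` is a state supported on the
shell, `w` is a weight function with `|w̃(δE)| ≤ w₀` for `|δE| ≥ ΔE`, and `κ ∈ (0,1)`, then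
there is a measurable exceptional set `X ⊆ ℝ` with `∫_X w < κ` outside of which
`(Tr(ρ(t) Π_A) - ⟨Π_A⟩_S)² < (ε + w₀ ⟨Π_A⟩_S) · d · Tr ρ² / κ`. -/
theorem cloned_energy_band_implies_equilibrium_at_almost_all_times
    {D : ℕ} (hD : 0 < D) (E : Fin D → ℝ)
    (S : Finset (Fin D)) (hd : 1 ≤ S.card)
    (PiA : Matrix (Fin D) (Fin D) ℂ) (hPiA : IsObservable PiA)
    (ΔE ε : ℝ) (hΔE : 0 < ΔE) (hε : 0 < ε)
    (hCEBT : ClonedEnergyBandTherm S E ΔE ε PiA)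
    (ρ : Matrix (Fin D) (Fin D) ℂ) (hρ : IsState ρ) (hsupp : SupportedOn S ρ)
    (w : ℝ → ℝ) (hw : IsWeight w) (w₀ : ℝ) (hw₀ : 0 ≤ w₀)
    (hband : ∀ δE : ℝ, ΔE ≤ |δE| → ‖fourier w δE‖ ≤ w₀)
    (κ : ℝ) (hκ0 : 0 < κ) (hκ1 : κ < 1) :
    ∃ X : Set ℝ, MeasurableSet X ∧ (∫ t in X, w t) < κ ∧
      ∀ t ∉ X,
        ((evolve E t ρ * PiA).trace.re - thermVal S PiA) ^ 2
          < (ε + w₀ * thermVal S PiA) * (S.card * (ρ * ρ).trace.re) / κ :=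
  cloned_energy_band_implies_equilibrium_at_almost_all_times_general E S hd PiA hPiA ΔE ε hε hCEBT ρ
    hρ hsupp w hw w₀ hw₀ hband κ hκ0

end QET
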